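/- Let E be the 2-dimensional ℂ-vector space with basis {x, y} and let ω be the symplectic form on E determined by ω(x,y) = 1 = −ω(y,x) and ω(x,x) = ω(y,y) = 0. Then the pairing {·,·}_ω : TE × TE → TE maps [TE,TE] × TE and TE × [TE,TE] into [TE,TE], and the induced bracket on the quotient 𝔏(Q) := TE/[TE,TE] gives a well-defined Lie algebra structure on 𝔏(Q): it is ℂ-bilinear, alternating, and satisfies the Jacobi identity. (Proposition 1.2 of the paper.) -/

import Mathlib

/- STATEMENT 0 (Proposition 1.2 of the paper): Let E be the 2-dimensional ℂ-vector space
with basis {x, y} and let ω be the symplectic form with ω(x,y) = 1 = −ω(y,x),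
ω(x,x) = ω(y,y) = 0. Then the pairing {·,·}_ω : TE × TE → TE maps [TE,TE] × TE and
TE × [TE,TE] into [TE,TE], and the induced bracket on 𝔏(Q) := TE/[TE,TE] is a well-defined
Lie algebra structure: ℂ-bilinear, alternating, and satisfying the Jacobi identity. -/

noncomputable section

open scoped BigOperators

/-- The product `u_1 ⊗ ⋯ ⊗ u_p` in the tensor algebra associated to a list of vectors. -/
def wordProd (k : Type*) [Field k] {E : Type*} [AddCommGroup E] [Module k E]
    (w : List E) : TensorAlgebra k E :=
  (w.map fun e => TensorAlgebra.ι k e).prod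

/-- The list obtained from `w` by deleting the entry at position `i` and cyclically rotating
so that the entries after position `i` come first. -/
def rotAt {E : Type*} (w : List E) (i : ℕ) : List E :=
  w.drop (i + 1) ++ w.take i

/-- `[TE,TE]`: the k-linear span of all commutators in the tensor algebra. -/
def commSpan (k E : Type*) [Field k] [AddCommGroup E] [Module k E] :
    Submodule k (TensorAlgebra k E) :=
  Submodule.span k {z | ∃ a b : TensorAlgebra k E, z = a * b - b * a}

/-- The value of the pairing `{·,·}_ω` on a pair of homogeneous tensors
`u_1 ⊗ ⋯ ⊗ u_p`, `v_1 ⊗ ⋯ ⊗ v_q`: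
`Σ_{i,j} ω(u_i, v_j) • u_{i+1}⊗⋯⊗u_p⊗u_1⊗⋯⊗u_{i−1} ⊗ v_{j+1}⊗⋯⊗v_q⊗v_1⊗⋯⊗v_{j−1}`. -/
def wordBracket {k : Type*} [Field k] {E : Type*} [AddCommGroup E] [Module k E]
    (ω : E →ₗ[k] E →ₗ[k] k) (u v : List E) : TensorAlgebra k E :=
  ∑ i : Fin u.length, ∑ j : Fin v.length,
    ω (u.get i) (v.get j) • wordProd k (rotAt u i ++ rotAt v j)

/-!
Modulo commutators a word only matters as a cyclic word, and `wordBracket ω u v` sums over all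
rotations of `u` and of `v`, so it only depends on the cyclic classes of `u` and `v`: the pairing
kills `[TE,TE]` in each argument and descends to the quotient. Skew-symmetry of `ω` makes
`{u,v} + {v,u}` a sum of commutators, so the induced bracket is alternating.

For the Jacobi identity, expanding `{u,{v,w}}` modulo commutators gives `S(u,v,w) - S(u,w,v)`,
where `S(u,v,w)` sums the cyclic words obtained by pairing a letter of `v` with a letter of `w`
and then a letter of `u` with another letter of `v`. Exchanging the roles of the two letters of
`v` shows `S(u,v,w) = S(w,v,u)`, and then the six terms of the cyclic sum cancel in pairs.
-/

open Finset

theorem Submodule.exists_liftQ₂ {R M N P : Type*} [CommRing R] [AddCommGroup M] [Module R M]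
    [AddCommGroup N] [Module R N] [AddCommGroup P] [Module R P]
    (p : Submodule R M) (q : Submodule R N) (r : Submodule R P) (B : M →ₗ[R] N →ₗ[R] P)
    (hp : ∀ f ∈ p, ∀ g, B f g ∈ r) (hq : ∀ f, ∀ g ∈ q, B f g ∈ r) :
    ∃ BQ : (M ⧸ p) →ₗ[R] (N ⧸ q) →ₗ[R] (P ⧸ r),
      ∀ f g, BQ (Submodule.Quotient.mk f) (Submodule.Quotient.mk g) =
        Submodule.Quotient.mk (B f g) := by
  let B' : M →ₗ[R] compatibleMaps q r := B.codRestrict _ fun f g hg => hq f g hg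
  refine ⟨p.liftQ (mapQLinear q r ∘ₗ B') fun f hf => ?_, fun f g => rfl⟩
  ext g
  exact (Submodule.Quotient.mk_eq_zero r).2 (hp f hf g)

namespace List

variable {α : Type*}

theorem length_rotAt {l : List α} {n : ℕ} (h : n < l.length) :
    (rotAt l n).length = l.length - 1 := by
  simp only [rotAt, length_append, length_drop, length_take]
  omega

theorem rotate_eq_getD_cons (d : α) {l : List α} {n : ℕ} (h : n < l.length) :
    l.rotate n = l.getD n d :: rotAt l n := by
  rw [rotate_eq_drop_append_take h.le, drop_eq_getElem_cons h, getD_eq_getElem l d h, rotAt,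
    cons_append]

theorem rotate_append_eq_getD_cons (d : α) (y z : List α) {m : ℕ} (hm : m < y.length) :
    (y ++ z).rotate m = y.getD m d :: (y.drop (m + 1) ++ z ++ y.take m) := by
  rw [rotate_eq_drop_append_take (by rw [length_append]; omega), drop_append_of_le_length hm.le,
    take_append_of_le_length hm.le, drop_eq_getElem_cons hm, getD_eq_getElem y d hm]
  simp only [cons_append, append_assoc]

theorem rotate_append_length_add (y z : List α) (m : ℕ) :
    (y ++ z).rotate (y.length + m) = (z ++ y).rotate m := by
  rw [← rotate_rotate, rotate_append_length_eq]

theorem sum_range_rotate_append_comm {M : Type*} [AddCommMonoid M] (f : List α → M)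
    (u v : List α) :
    ∑ i ∈ Finset.range (u ++ v).length, f ((u ++ v).rotate i)
      = ∑ i ∈ Finset.range (v ++ u).length, f ((v ++ u).rotate i) := by
  simp only [length_append, sum_range_add, rotate_append_length_add]
  exact add_comm _ _

theorem rotAt_add_succ_mod (d : α) {v : List α} {j m : ℕ} (hj : j < v.length)
    (hm : m < v.length - 1) :
    v.getD ((j + m + 1) % v.length) d = (rotAt v j).getD m d ∧
      rotAt v ((j + m + 1) % v.length)
        = (rotAt v j).drop (m + 1) ++ v.getD j d :: (rotAt v j).take m := by
  have hm' : m < (rotAt v j).length := by rw [length_rotAt hj]; exact hm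
  have hrot : v.rotate ((j + m + 1) % v.length)
      = (rotAt v j).getD m d :: ((rotAt v j).drop (m + 1) ++ v.getD j d :: (rotAt v j).take m) := by
    rw [rotate_mod, show j + m + 1 = j + (m + 1) by omega, ← rotate_rotate,
      rotate_eq_getD_cons d hj, rotate_cons_succ, rotate_append_eq_getD_cons d _ _ hm']
    simp
  rw [rotate_eq_getD_cons d (Nat.mod_lt _ (by omega))] at hrot
  exact cons.inj hrot

end List

section Words

variable {k : Type*} [Field k] {E : Type*} [AddCommGroup E] [Module k E]

theorem wordProd_append (u v : List E) :
    wordProd k (u ++ v) = wordProd k u * wordProd k v := by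
  simp [wordProd]

theorem span_range_wordProd :
    Submodule.span k (Set.range (wordProd k : List E → TensorAlgebra k E)) = ⊤ := by
  rw [eq_top_iff]
  rintro x -
  induction x using TensorAlgebra.induction with
  | algebraMap r =>
    rw [Algebra.algebraMap_eq_smul_one]
    exact Submodule.smul_mem _ _ (Submodule.subset_span ⟨[], rfl⟩)
  | ι e => exact Submodule.subset_span ⟨[e], by simp [wordProd]⟩
  | mul a b ha hb =>
    have hab := Submodule.mul_mem_mul ha hb
    rw [Submodule.span_mul_span] at hab
    refine Submodule.span_mono ?_ hab
    rintro _ ⟨_, ⟨u, rfl⟩, _, ⟨v, rfl⟩, rfl⟩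
    exact ⟨u ++ v, wordProd_append u v⟩
  | add a b ha hb => exact Submodule.add_mem _ ha hb

theorem mem_of_forall_wordProd_mem {M : Type*} [AddCommGroup M] [Module k M]
    {p : Submodule k M} (φ : TensorAlgebra k E →ₗ[k] M) (h : ∀ l, φ (wordProd k l) ∈ p)
    (f : TensorAlgebra k E) : φ f ∈ p := by
  have hle : Submodule.span k (Set.range (wordProd k : List E → _)) ≤ p.comap φ :=
    Submodule.span_le.2 (Set.range_subset_iff.2 h)
  exact hle (span_range_wordProd (k := k) (E := E) ▸ Submodule.mem_top)

theorem apply_mul_comm_of_wordProd {M : Type*} [AddCommGroup M] [Module k M]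
    (B : TensorAlgebra k E →ₗ[k] TensorAlgebra k E →ₗ[k] M)
    (h : ∀ u v l, B (wordProd k (u ++ v)) (wordProd k l) = B (wordProd k (v ++ u)) (wordProd k l))
    (a b : TensorAlgebra k E) : B (a * b) = B (b * a) := by
  have hB : (LinearMap.mul k _).compr₂ B = (LinearMap.mul k _).flip.compr₂ B := by
    refine LinearMap.ext_on_range span_range_wordProd fun u =>
      LinearMap.ext_on_range span_range_wordProd fun v =>
        LinearMap.ext_on_range span_range_wordProd fun l => ?_
    simpa only [LinearMap.compr₂_apply, LinearMap.mul_apply', LinearMap.flip_apply,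
      ← wordProd_append] using h u v l
  exact LinearMap.congr_fun₂ hB a b

theorem mul_sub_mul_mem_commSpan (a b : TensorAlgebra k E) : a * b - b * a ∈ commSpan k E :=
  Submodule.subset_span ⟨a, b, rfl⟩

theorem commSpan_le_ker {M : Type*} [AddCommGroup M] [Module k M]
    (φ : TensorAlgebra k E →ₗ[k] M) (h : ∀ a b, φ (a * b) = φ (b * a)) :
    commSpan k E ≤ LinearMap.ker φ :=
  Submodule.span_le.2 fun _ ⟨a, b, hz⟩ => by simp [hz, h a b]

variable (k) in
def cycWord (l : List E) : TensorAlgebra k E ⧸ commSpan k E :=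
  Submodule.Quotient.mk (wordProd k l)

@[simp] theorem mkQ_wordProd (l : List E) :
    (commSpan k E).mkQ (wordProd k l) = cycWord k l :=
  rfl

theorem cycWord_append_comm (u v : List E) : cycWord k (u ++ v) = cycWord k (v ++ u) := by
  rw [cycWord, cycWord, Submodule.Quotient.eq, wordProd_append, wordProd_append]
  exact mul_sub_mul_mem_commSpan _ _

end Words

section WordBracket

variable {k : Type*} [Field k] {E : Type*} [AddCommGroup E] [Module k E]
  (ω : E →ₗ[k] E →ₗ[k] k)

def brTerm : List E → List E → TensorAlgebra k E
  | a :: x, b :: y => ω a b • wordProd k (x ++ y)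
  | _, _ => 0

@[simp] theorem brTerm_nil_left (t : List E) : brTerm ω [] t = 0 := by cases t <;> rfl

@[simp] theorem brTerm_nil_right (s : List E) : brTerm ω s [] = 0 := by cases s <;> rfl

theorem wordBracket_eq_sum_rotate (u v : List E) :
    wordBracket ω u v = ∑ i ∈ range u.length, ∑ j ∈ range v.length,
      brTerm ω (u.rotate i) (v.rotate j) := by
  rw [wordBracket, ← Fin.sum_univ_eq_sum_range]
  refine Finset.sum_congr rfl fun i _ => ?_
  rw [← Fin.sum_univ_eq_sum_range]
  refine Finset.sum_congr rfl fun j _ => ?_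
  rw [List.rotate_eq_getD_cons 0 i.isLt, List.rotate_eq_getD_cons 0 j.isLt, brTerm,
    List.getD_eq_getElem u 0 i.isLt, List.getD_eq_getElem v 0 j.isLt]
  rfl

theorem wordBracket_append_comm_left (u v w : List E) :
    wordBracket ω (u ++ v) w = wordBracket ω (v ++ u) w := by
  simp only [wordBracket_eq_sum_rotate]
  exact List.sum_range_rotate_append_comm
    (fun s => ∑ j ∈ range w.length, brTerm ω s (w.rotate j)) u v

theorem wordBracket_append_comm_right (w u v : List E) :
    wordBracket ω w (u ++ v) = wordBracket ω w (v ++ u) := by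
  simp only [wordBracket_eq_sum_rotate]
  exact Finset.sum_congr rfl fun i _ =>
    List.sum_range_rotate_append_comm (fun t => brTerm ω (w.rotate i) t) u v

variable {ω}

theorem brTerm_add_brTerm_swap_mem (hskew : ∀ a b : E, ω a b = - ω b a) (s t : List E) :
    brTerm ω s t + brTerm ω t s ∈ commSpan k E := by
  match s, t with
  | [], _ => simp
  | _, [] => simp
  | a :: x, b :: y =>
    rw [brTerm, brTerm, hskew b a, neg_smul, ← sub_eq_add_neg, ← smul_sub, wordProd_append,
      wordProd_append]
    exact Submodule.smul_mem _ _ (mul_sub_mul_mem_commSpan _ _)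

theorem wordBracket_add_wordBracket_swap_mem (hskew : ∀ a b : E, ω a b = - ω b a)
    (u v : List E) : wordBracket ω u v + wordBracket ω v u ∈ commSpan k E := by
  rw [wordBracket_eq_sum_rotate ω u v, wordBracket_eq_sum_rotate ω v u, Finset.sum_comm,
    ← Finset.sum_add_distrib]
  refine Submodule.sum_mem _ fun i _ => ?_
  rw [← Finset.sum_add_distrib]
  exact Submodule.sum_mem _ fun j _ => brTerm_add_brTerm_swap_mem hskew _ _

end WordBracket

section Pairing

variable {k : Type*} [Field k] {E : Type*} [AddCommGroup E] [Module k E]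

def ExtendsWordBracket (ω : E →ₗ[k] E →ₗ[k] k)
    (B : TensorAlgebra k E →ₗ[k] TensorAlgebra k E →ₗ[k] TensorAlgebra k E) : Prop :=
  ∀ u v, B (wordProd k u) (wordProd k v) = wordBracket ω u v

variable {ω : E →ₗ[k] E →ₗ[k] k}
  {B : TensorAlgebra k E →ₗ[k] TensorAlgebra k E →ₗ[k] TensorAlgebra k E}

namespace ExtendsWordBracket

theorem map_mul_comm (hB : ExtendsWordBracket ω B) (a b : TensorAlgebra k E) :
    B (a * b) = B (b * a) :=
  apply_mul_comm_of_wordProd B (fun u v l => by rw [hB, hB, wordBracket_append_comm_left]) a b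

theorem apply_mul_comm (hB : ExtendsWordBracket ω B) (f a b : TensorAlgebra k E) :
    B f (a * b) = B f (b * a) :=
  LinearMap.congr_fun (apply_mul_comm_of_wordProd B.flip
    (fun u v l => by rw [LinearMap.flip_apply, LinearMap.flip_apply, hB, hB,
      wordBracket_append_comm_right]) a b) f

theorem map_eq_zero_of_mem (hB : ExtendsWordBracket ω B) {z : TensorAlgebra k E}
    (hz : z ∈ commSpan k E) : B z = 0 :=
  commSpan_le_ker B hB.map_mul_comm hz

theorem apply_eq_zero_of_mem (hB : ExtendsWordBracket ω B) (f : TensorAlgebra k E)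
    {z : TensorAlgebra k E} (hz : z ∈ commSpan k E) : B f z = 0 :=
  commSpan_le_ker (B f) (hB.apply_mul_comm f) hz

theorem add_swap_mem (hB : ExtendsWordBracket ω B) (hskew : ∀ a b : E, ω a b = - ω b a)
    (f g : TensorAlgebra k E) : B f g + B g f ∈ commSpan k E := by
  have hword : ∀ u g, B (wordProd k u) g + B g (wordProd k u) ∈ commSpan k E := fun u =>
    mem_of_forall_wordProd_mem (B (wordProd k u) + B.flip (wordProd k u)) fun v => by
      rw [LinearMap.add_apply, LinearMap.flip_apply, hB, hB]
      exact wordBracket_add_wordBracket_swap_mem hskew u v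
  rw [add_comm]
  exact mem_of_forall_wordProd_mem (B g + B.flip g) (fun u => by rw [add_comm]; exact hword u g) f

theorem apply_self_mem [NeZero (2 : k)] (hB : ExtendsWordBracket ω B)
    (hskew : ∀ a b : E, ω a b = - ω b a) (f : TensorAlgebra k E) : B f f ∈ commSpan k E := by
  have h := hB.add_swap_mem hskew f f
  rwa [← two_smul k, Submodule.smul_mem_iff _ two_ne_zero] at h

end ExtendsWordBracket

end Pairing

/-- For a word `v` of length `n`, sends `(j, m)` to the pair describing the same two letters of `v`
with their roles exchanged: the `m`-th letter of `rotAt v j` becomes letter `j'` of `v`, and `v_j`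
becomes letter `m'` of `rotAt v j'`. -/
def letterSwap (n : ℕ) (p : ℕ × ℕ) : ℕ × ℕ := ((p.1 + p.2 + 1) % n, n - 2 - p.2)

theorem letterSwap_mem {n : ℕ} {p : ℕ × ℕ} (hp : p ∈ range n ×ˢ range (n - 1)) :
    letterSwap n p ∈ range n ×ˢ range (n - 1) := by
  simp only [mem_product, mem_range, letterSwap] at hp ⊢
  exact ⟨Nat.mod_lt _ (by omega), by omega⟩

theorem letterSwap_letterSwap {n : ℕ} {p : ℕ × ℕ} (hp : p ∈ range n ×ˢ range (n - 1)) :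
    letterSwap n (letterSwap n p) = p := by
  obtain ⟨j, m⟩ := p
  simp only [mem_product, mem_range] at hp
  have hj : ((j + m + 1) % n + (n - 2 - m) + 1) % n = j := by
    rw [Nat.add_assoc, Nat.mod_add_mod, show j + m + 1 + (n - 2 - m + 1) = j + n by omega,
      Nat.add_mod_right, Nat.mod_eq_of_lt hp.1]
  simp only [letterSwap, Prod.mk.injEq]
  exact ⟨hj, by omega⟩

section Jacobi

variable {k : Type*} [Field k] {E : Type*} [AddCommGroup E] [Module k E]
  (ω : E →ₗ[k] E →ₗ[k] k)

/-- The term of `{u,{v,w}}` in which `v_j` is paired with `w_l` and then `u_i` with the `m`-th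
letter of `rotAt v j`, as a cyclic word. -/
def spliceTerm (u v w : List E) (i j l m : ℕ) : TensorAlgebra k E ⧸ commSpan k E :=
  (ω (v.getD j 0) (w.getD l 0) * ω (u.getD i 0) ((rotAt v j).getD m 0)) •
    cycWord k ((rotAt v j).take m ++ rotAt u i ++ (rotAt v j).drop (m + 1) ++ rotAt w l)

variable {ω}

theorem spliceTerm_eq_letterSwap (hskew : ∀ a b : E, ω a b = - ω b a) (u v w : List E)
    (i l : ℕ) {j m : ℕ} (hj : j < v.length) (hm : m < v.length - 1) :
    spliceTerm ω u v w i j l m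
      = spliceTerm ω w v u l (letterSwap v.length (j, m)).1 i (letterSwap v.length (j, m)).2 := by
  obtain ⟨hgetD, hrot⟩ := List.rotAt_add_succ_mod 0 hj hm
  set y := rotAt v j
  have hlen : (y.drop (m + 1)).length = v.length - 2 - m := by
    rw [List.length_drop, List.length_rotAt hj]; omega
  simp only [spliceTerm, letterSwap, hgetD, hrot, ← hlen, List.take_left', List.getD_append_right,
    le_refl, Nat.sub_self, List.getD_cons_zero, List.drop_length_add_append, List.drop_succ_cons,
    List.drop_zero]
  rw [hskew (y.getD m 0), hskew (w.getD l 0), neg_mul_neg, mul_comm]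
  congr 1
  simpa only [List.append_assoc] using
    cycWord_append_comm (k := k) (y.take m ++ rotAt u i) (y.drop (m + 1) ++ rotAt w l)

theorem sum_spliceTerm_comm (hskew : ∀ a b : E, ω a b = - ω b a) (u v w : List E) (i l : ℕ) :
    ∑ j ∈ range v.length, ∑ m ∈ range (v.length - 1), spliceTerm ω u v w i j l m
      = ∑ j ∈ range v.length, ∑ m ∈ range (v.length - 1), spliceTerm ω w v u l j i m := by
  rw [← sum_product', ← sum_product']
  refine sum_nbij' (letterSwap v.length) (letterSwap v.length) (fun _ => letterSwap_mem)
    (fun _ => letterSwap_mem) (fun _ => letterSwap_letterSwap) (fun _ => letterSwap_letterSwap)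
    fun p hp => ?_
  simp only [mem_product, mem_range] at hp
  exact spliceTerm_eq_letterSwap hskew u v w i l hp.1 hp.2

variable (ω) in
def spliceSum (u v w : List E) : TensorAlgebra k E ⧸ commSpan k E :=
  ∑ i ∈ range u.length, ∑ l ∈ range w.length, ∑ j ∈ range v.length,
    ∑ m ∈ range (v.length - 1), spliceTerm ω u v w i j l m

theorem spliceSum_comm (hskew : ∀ a b : E, ω a b = - ω b a) (u v w : List E) :
    spliceSum ω u v w = spliceSum ω w v u := by
  rw [spliceSum, spliceSum, Finset.sum_comm]
  exact sum_congr rfl fun l _ => sum_congr rfl fun i _ => sum_spliceTerm_comm hskew u v w i l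

theorem mkQ_brTerm_cons_rotate_append (a : E) (x y z : List E) {m : ℕ} (hm : m < y.length) :
    (commSpan k E).mkQ (brTerm ω (a :: x) ((y ++ z).rotate m))
      = ω a (y.getD m 0) • cycWord k (y.take m ++ x ++ y.drop (m + 1) ++ z) := by
  rw [List.rotate_append_eq_getD_cons 0 y z hm, brTerm, map_smul]
  congr 1
  simpa only [List.append_assoc, mkQ_wordProd] using
    cycWord_append_comm (k := k) (x ++ (y.drop (m + 1) ++ z)) (y.take m)

variable {B : TensorAlgebra k E →ₗ[k] TensorAlgebra k E →ₗ[k] TensorAlgebra k E}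

theorem ExtendsWordBracket.mkQ_apply_brTerm_rotate (hB : ExtendsWordBracket ω B)
    (hskew : ∀ a b : E, ω a b = - ω b a) (u v w : List E) {j l : ℕ} (hj : j < v.length)
    (hl : l < w.length) :
    (commSpan k E).mkQ (B (wordProd k u) (brTerm ω (v.rotate j) (w.rotate l)))
      = ∑ i ∈ range u.length, (∑ m ∈ range (v.length - 1), spliceTerm ω u v w i j l m
          - ∑ m ∈ range (w.length - 1), spliceTerm ω u w v i l j m) := by
  rw [List.rotate_eq_getD_cons 0 hj, List.rotate_eq_getD_cons 0 hl, brTerm, map_smul, hB,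
    wordBracket_eq_sum_rotate, map_smul, map_sum, smul_sum]
  refine sum_congr rfl fun i hi => ?_
  rw [List.rotate_eq_getD_cons 0 (mem_range.1 hi), map_sum, smul_sum, List.length_append,
    sum_range_add, sub_eq_add_neg, ← sum_neg_distrib]
  congr 1
  · refine sum_congr (by rw [List.length_rotAt hj]) fun m hm => ?_
    rw [mkQ_brTerm_cons_rotate_append _ _ _ _ (by rw [List.length_rotAt hj]; exact mem_range.1 hm),
      smul_smul]
    rfl
  · refine sum_congr (by rw [List.length_rotAt hl]) fun m hm => ?_
    rw [List.rotate_append_length_add,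
      mkQ_brTerm_cons_rotate_append _ _ _ _ (by rw [List.length_rotAt hl]; exact mem_range.1 hm),
      smul_smul, spliceTerm, hskew (w.getD l 0), neg_mul, neg_smul, neg_neg]

theorem ExtendsWordBracket.mkQ_apply_apply_wordProd (hB : ExtendsWordBracket ω B)
    (hskew : ∀ a b : E, ω a b = - ω b a) (u v w : List E) :
    (commSpan k E).mkQ (B (wordProd k u) (B (wordProd k v) (wordProd k w)))
      = spliceSum ω u v w - spliceSum ω u w v := by
  rw [hB v w, wordBracket_eq_sum_rotate]
  simp only [map_sum]
  rw [sum_congr rfl fun j hj => sum_congr rfl fun l hl =>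
    hB.mkQ_apply_brTerm_rotate hskew u v w (mem_range.1 hj) (mem_range.1 hl)]
  simp only [sum_sub_distrib, spliceSum]
  refine congrArg₂ (· - ·) ?_ sum_comm_cycle
  rw [sum_comm_cycle]
  exact sum_congr rfl fun _ _ => sum_comm

end Jacobi

def jacobiator {R M : Type*} [CommRing R] [AddCommGroup M] [Module R M]
    (B : M →ₗ[R] M →ₗ[R] M) (f g h : M) : M :=
  B f (B g h) + B g (B h f) + B h (B f g)

theorem jacobiator_rotate {R M : Type*} [CommRing R] [AddCommGroup M] [Module R M]
    (B : M →ₗ[R] M →ₗ[R] M) (f g h : M) : jacobiator B f g h = jacobiator B g h f :=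
  add_rotate _ _ _

namespace ExtendsWordBracket

variable {k : Type*} [Field k] {E : Type*} [AddCommGroup E] [Module k E]
  {ω : E →ₗ[k] E →ₗ[k] k}
  {B : TensorAlgebra k E →ₗ[k] TensorAlgebra k E →ₗ[k] TensorAlgebra k E}

theorem jacobiator_wordProd_mem (hB : ExtendsWordBracket ω B)
    (hskew : ∀ a b : E, ω a b = - ω b a) (u v w : List E) :
    jacobiator B (wordProd k u) (wordProd k v) (wordProd k w) ∈ commSpan k E := by
  rw [← Submodule.Quotient.mk_eq_zero, ← Submodule.mkQ_apply, jacobiator, map_add, map_add,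
    hB.mkQ_apply_apply_wordProd hskew, hB.mkQ_apply_apply_wordProd hskew,
    hB.mkQ_apply_apply_wordProd hskew, spliceSum_comm hskew w v u, spliceSum_comm hskew u w v,
    spliceSum_comm hskew v u w]
  abel

/-- The jacobiator is linear in its last argument and invariant under cyclic rotation, so it
reduces to words one argument at a time. -/
theorem jacobiator_mem (hB : ExtendsWordBracket ω B) (hskew : ∀ a b : E, ω a b = - ω b a)
    (f g h : TensorAlgebra k E) : jacobiator B f g h ∈ commSpan k E := by
  have linear_right : ∀ f g, (∀ w, jacobiator B f g (wordProd k w) ∈ commSpan k E) →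
      ∀ h, jacobiator B f g h ∈ commSpan k E := fun f g =>
    mem_of_forall_wordProd_mem (B f ∘ₗ B g + B g ∘ₗ B.flip f + B.flip (B f g))
  have h₁ : ∀ u v h, jacobiator B (wordProd k u) (wordProd k v) h ∈ commSpan k E :=
    fun u v => linear_right _ _ (hB.jacobiator_wordProd_mem hskew u v)
  have h₂ : ∀ h u g, jacobiator B h (wordProd k u) g ∈ commSpan k E := fun h u =>
    linear_right _ _ fun v => by rw [jacobiator_rotate]; exact h₁ u v h
  rw [jacobiator_rotate]
  exact linear_right g h (fun u => by rw [jacobiator_rotate]; exact h₂ h u g) f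

end ExtendsWordBracket

theorem ginzburg_prop_1_2_general
    (E : Type*) [AddCommGroup E] [Module ℂ E]
    (ω : E →ₗ[ℂ] E →ₗ[ℂ] ℂ)
    -- ω is the symplectic form determined by ω(x,y) = 1 = −ω(y,x), ω(x,x) = ω(y,y) = 0:
    (hskew : ∀ u v : E, ω u v = - ω v u)
    -- `Br` is the ℂ-bilinear pairing `{·,·}_ω : TE × TE → TE`, determined by its values on
    -- homogeneous tensors (and vanishing when either argument lies in E^{⊗0} = ℂ, which is
    -- the case `u = []` resp. `v = []` of the empty sum below):
    (Br : TensorAlgebra ℂ E →ₗ[ℂ] TensorAlgebra ℂ E →ₗ[ℂ] TensorAlgebra ℂ E)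
    (hBr : ∀ u v : List E, Br (wordProd ℂ u) (wordProd ℂ v) = wordBracket ω u v) :
    -- `{·,·}_ω` maps [TE,TE] × TE and TE × [TE,TE] into [TE,TE]:
    (∀ f ∈ commSpan ℂ E, ∀ g : TensorAlgebra ℂ E,
        Br f g ∈ commSpan ℂ E ∧ Br g f ∈ commSpan ℂ E) ∧
    -- hence the bracket descends to a well-defined ℂ-bilinear bracket on
    -- 𝔏(Q) = TE/[TE,TE]:
    (∃ BrQ : (TensorAlgebra ℂ E ⧸ commSpan ℂ E) →ₗ[ℂ]
        (TensorAlgebra ℂ E ⧸ commSpan ℂ E) →ₗ[ℂ] (TensorAlgebra ℂ E ⧸ commSpan ℂ E),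
      ∀ f g : TensorAlgebra ℂ E,
        BrQ (Submodule.Quotient.mk f) (Submodule.Quotient.mk g) =
          Submodule.Quotient.mk (Br f g)) ∧
    -- the induced bracket is alternating:
    (∀ f : TensorAlgebra ℂ E, Br f f ∈ commSpan ℂ E) ∧
    -- the induced bracket satisfies the Jacobi identity:
    (∀ f g h : TensorAlgebra ℂ E,
        Br f (Br g h) + Br g (Br h f) + Br h (Br f g) ∈ commSpan ℂ E) := by
  have hB : ExtendsWordBracket ω Br := hBr
  have hleft : ∀ f ∈ commSpan ℂ E, ∀ g, Br f g ∈ commSpan ℂ E := fun f hf g => by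
    simp only [hB.map_eq_zero_of_mem hf, LinearMap.zero_apply, zero_mem]
  have hright : ∀ f, ∀ g ∈ commSpan ℂ E, Br f g ∈ commSpan ℂ E := fun f g hg => by
    simp only [hB.apply_eq_zero_of_mem f hg, zero_mem]
  exact ⟨fun f hf g => ⟨hleft f hf g, hright g f hf⟩,
    Submodule.exists_liftQ₂ _ _ _ Br hleft hright, hB.apply_self_mem hskew,
    hB.jacobiator_mem hskew⟩

theorem ginzburg_prop_1_2
    (E : Type*) [AddCommGroup E] [Module ℂ E]
    -- E is 2-dimensional with basis {x, y}, x = b 0, y = b 1: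
    (b : Module.Basis (Fin 2) ℂ E)
    (ω : E →ₗ[ℂ] E →ₗ[ℂ] ℂ)
    -- ω is the symplectic form determined by ω(x,y) = 1 = −ω(y,x), ω(x,x) = ω(y,y) = 0:
    (hskew : ∀ u v : E, ω u v = - ω v u)
    (hxy : ω (b 0) (b 1) = 1) (hyx : ω (b 1) (b 0) = -1)
    (hxx : ω (b 0) (b 0) = 0) (hyy : ω (b 1) (b 1) = 0)
    -- `Br` is the ℂ-bilinear pairing `{·,·}_ω : TE × TE → TE`, determined by its values on
    -- homogeneous tensors (and vanishing when either argument lies in E^{⊗0} = ℂ, which is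
    -- the case `u = []` resp. `v = []` of the empty sum below):
    (Br : TensorAlgebra ℂ E →ₗ[ℂ] TensorAlgebra ℂ E →ₗ[ℂ] TensorAlgebra ℂ E)
    (hBr : ∀ u v : List E, Br (wordProd ℂ u) (wordProd ℂ v) = wordBracket ω u v) :
    -- `{·,·}_ω` maps [TE,TE] × TE and TE × [TE,TE] into [TE,TE]:
    (∀ f ∈ commSpan ℂ E, ∀ g : TensorAlgebra ℂ E,
        Br f g ∈ commSpan ℂ E ∧ Br g f ∈ commSpan ℂ E) ∧
    -- hence the bracket descends to a well-defined ℂ-bilinear bracket on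
    -- 𝔏(Q) = TE/[TE,TE]:
    (∃ BrQ : (TensorAlgebra ℂ E ⧸ commSpan ℂ E) →ₗ[ℂ]
        (TensorAlgebra ℂ E ⧸ commSpan ℂ E) →ₗ[ℂ] (TensorAlgebra ℂ E ⧸ commSpan ℂ E),
      ∀ f g : TensorAlgebra ℂ E,
        BrQ (Submodule.Quotient.mk f) (Submodule.Quotient.mk g) =
          Submodule.Quotient.mk (Br f g)) ∧
    -- the induced bracket is alternating:
    (∀ f : TensorAlgebra ℂ E, Br f f ∈ commSpan ℂ E) ∧
    -- the induced bracket satisfies the Jacobi identity: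
    (∀ f g h : TensorAlgebra ℂ E,
        Br f (Br g h) + Br g (Br h f) + Br h (Br f g) ∈ commSpan ℂ E) :=
  ginzburg_prop_1_2_general E ω hskew Br hBr
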